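/- arXiv:2211.05686 — 4 statements merged into one kernel-verified Lean document; each statement's English description precedes it below -/
import Mathlib

section
/- For every integer n ≥ 2, the identity ∑_{k=1}^{n-1} C(n,k) · (2k-3)!! · (2n-2k-3)!! = 2·(2n-3)!! holds, where (-1)!! = 1 and (2m-1)!! denotes the product of all odd positive integers up to 2m-1. -/
/-!
Extend `m ↦ (2m - 3)‼` to `m = 0` by `(-3)‼ = -1`, the value forced by `(-1)‼ = (-1) · (-3)‼`.
The full sum `T n = ∑_{i + j = n} C(n, i) (2i - 3)‼ (2j - 3)‼` is then `n!` times the `n`-th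
coefficient of `f(x)² = 1 - 2x`, where `f(x) = ∑ (2m - 3)‼ xᵐ / m! = -√(1 - 2x)`, so it vanishes
for `n ≥ 2`; the two boundary terms `i = 0`, `j = 0` contribute `-2 (2n - 3)‼`.
Without generating functions: the recursion `(2m - 1)‼ = (2m - 1) (2m - 3)‼` and Pascal's rule give
`T (n + 1) = (2n - 2) T n`, which vanishes at `n = 1`.
-/

open Nat Finset

theorem sum_antidiagonal_choose_mul_succ {R : Type*} [CommSemiring R] (f : ℕ → R) (c d : R)
    (hf : ∀ m, f (m + 1) = (c * m + d) * f m) (n : ℕ) :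
    ∑ ij ∈ antidiagonal (n + 1), ((n + 1).choose ij.1 : R) * (f ij.1 * f ij.2) =
      (c * n + 2 * d) * ∑ ij ∈ antidiagonal n, (n.choose ij.1 : R) * (f ij.1 * f ij.2) := by
  rw [sum_antidiagonal_choose_succ_mul (fun i j => f i * f j), ← sum_add_distrib, mul_sum]
  refine sum_congr rfl fun ij hij => ?_
  have hn : ij.1 + ij.2 = n := mem_antidiagonal.mp hij
  rw [choose_symm_of_eq_add hn.symm, hf, hf, ← hn]
  push_cast
  ring

def doubleFactorialTwoMulSubThree : ℕ → ℤ
  | 0 => -1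
  | m + 1 => (2 * m - 1) * doubleFactorialTwoMulSubThree m

theorem doubleFactorialTwoMulSubThree_of_pos {m : ℕ} (hm : 0 < m) :
    doubleFactorialTwoMulSubThree m = ((2 * m - 3)‼ : ℕ) := by
  induction m, hm using Nat.le_induction with
  | base => rfl
  | succ m hm ih =>
    rw [doubleFactorialTwoMulSubThree, ih]
    obtain ⟨j, rfl⟩ : ∃ j, m = j + 1 := ⟨m - 1, by omega⟩
    rcases j with _ | j
    · rfl
    · rw [show 2 * (j + 1 + 1 + 1) - 3 = 2 * j + 1 + 2 by omega, doubleFactorial_add_two,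
        show 2 * (j + 1 + 1) - 3 = 2 * j + 1 by omega]
      push_cast
      ring

theorem sum_antidiagonal_choose_mul_doubleFactorialTwoMulSubThree {n : ℕ} (hn : 2 ≤ n) :
    ∑ ij ∈ antidiagonal n, (n.choose ij.1 : ℤ) *
      (doubleFactorialTwoMulSubThree ij.1 * doubleFactorialTwoMulSubThree ij.2) = 0 := by
  induction n, hn using Nat.le_induction with
  | base => decide
  | succ n hn ih =>
    have hrec (m : ℕ) : doubleFactorialTwoMulSubThree (m + 1) =
        (2 * m + -1) * doubleFactorialTwoMulSubThree m := by
      rw [doubleFactorialTwoMulSubThree, sub_eq_add_neg]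
    rw [sum_antidiagonal_choose_mul_succ _ 2 (-1) hrec, ih, mul_zero]

theorem stmt0 (n : ℕ) (hn : 2 ≤ n) :
    ∑ k ∈ Finset.Ico 1 n, n.choose k * (2 * k - 3)‼ * (2 * (n - k) - 3)‼
      = 2 * (2 * n - 3)‼ := by
  have h := sum_antidiagonal_choose_mul_doubleFactorialTwoMulSubThree hn
  rw [Nat.sum_antidiagonal_eq_sum_range_succ_mk, sum_range_succ,
    sum_range_eq_add_Ico _ (by omega)] at h
  have hinterior : ∑ k ∈ Ico 1 n, (n.choose k : ℤ) *
      (doubleFactorialTwoMulSubThree k * doubleFactorialTwoMulSubThree (n - k)) =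
      ((∑ k ∈ Ico 1 n, n.choose k * (2 * k - 3)‼ * (2 * (n - k) - 3)‼ : ℕ) : ℤ) := by
    push_cast
    refine sum_congr rfl fun k hk => ?_
    have hk := mem_Ico.mp hk
    rw [doubleFactorialTwoMulSubThree_of_pos (by omega),
      doubleFactorialTwoMulSubThree_of_pos (by omega)]
    ring
  simp only [choose_zero_right, choose_self, Nat.sub_zero, Nat.sub_self, hinterior,
    doubleFactorialTwoMulSubThree_of_pos (by omega : 0 < n), doubleFactorialTwoMulSubThree] at h
  omega
end

section
/- Let (a_n)_{n≥0} be a sequence of positive reals and suppose there exist constants γ > 0, n₀ ∈ ℕ, A > 0, and a sequence (δ_n)_{n≥n₀} of reals with δ_n → 0 such that a_{n+1} = exp(-(1+δ_n)·A·a_n^γ)·a_n for all n ≥ n₀. Then a_n · (γ A n)^{1/γ} → 1 as n → ∞. -/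
/-!
Once `1 + δ n > 0` the sequence decreases, so it converges, and the recursion leaves `0` as the
only possible limit. Then `b n = a n ^ (-γ)` satisfies `b (n + 1) = exp (x n) * b n` with
`x n = γ (1 + δ n) A a n ^ γ → 0`, so `b (n + 1) - b n = (exp (x n) - 1) / x n * γ (1 + δ n) A`
tends to `γ A`. By Cesàro `b n / n → γ A`, and raising to the power `1 / γ` gives the claim.
-/

open Filter Real Topology

lemma tendsto_exp_sub_one_div : Tendsto (fun x => (exp x - 1) / x) (𝓝[≠] 0) (𝓝 1) := by
  have h := hasDerivAt_iff_tendsto_slope.mp (hasDerivAt_exp 0)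
  rw [exp_zero] at h
  refine h.congr fun x => ?_
  simp [slope_def_field]

lemma tendsto_div_natCast_of_tendsto_sub {b : ℕ → ℝ} {l : ℝ}
    (h : Tendsto (fun n => b (n + 1) - b n) atTop (𝓝 l)) :
    Tendsto (fun n : ℕ => b n / n) atTop (𝓝 l) := by
  have hc := h.cesaro.add (tendsto_const_div_atTop_nhds_zero_nat (b 0))
  rw [add_zero] at hc
  refine hc.congr fun n => ?_
  rw [Finset.sum_range_sub]
  ring

lemma tendsto_mul_rpow_of_tendsto_rpow_neg_div {a : ℕ → ℝ} {γ l : ℝ} (ha : ∀ n, 0 < a n)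
    (hγ : γ ≠ 0) (hl : 0 < l) (h : Tendsto (fun n : ℕ => a n ^ (-γ) / n) atTop (𝓝 l)) :
    Tendsto (fun n : ℕ => a n * (l * n) ^ (1 / γ)) atTop (𝓝 1) := by
  have hlim := ((tendsto_const_nhds (x := l)).div h hl.ne').rpow_const (p := 1 / γ)
    (Or.inl (div_ne_zero hl.ne' hl.ne'))
  rw [div_self hl.ne', one_rpow] at hlim
  refine hlim.congr fun n => ?_
  have hinv : (a n ^ (-γ)) ^ (1 / γ) = (a n)⁻¹ := by
    rw [← rpow_mul (ha n).le, neg_mul, mul_one_div_cancel hγ, rpow_neg_one]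
  rw [Pi.div_apply, div_div_eq_mul_div, div_rpow (by positivity) (rpow_pos_of_pos (ha n) _).le, hinv,
    div_inv_eq_mul, mul_comm]

section ExpRecursion

variable {a c : ℕ → ℝ} {γ c₀ : ℝ}

lemma tendsto_zero_of_eq_exp_neg_mul (ha : ∀ n, 0 < a n) (hc : Tendsto c atTop (𝓝 c₀))
    (hc₀ : 0 < c₀) (hrec : ∀ᶠ n in atTop, a (n + 1) = exp (-(c n * a n ^ γ)) * a n) :
    Tendsto a atTop (𝓝 0) := by
  obtain ⟨N, hN⟩ := eventually_atTop.mp (hrec.and (hc.eventually (lt_mem_nhds hc₀)))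
  have hanti : Antitone (fun k => a (k + N)) := by
    refine antitone_nat_of_succ_le fun k => ?_
    obtain ⟨hk, hck⟩ := hN (k + N) (Nat.le_add_left _ _)
    rw [Nat.add_right_comm, hk]
    refine mul_le_of_le_one_left (ha _).le (exp_le_one_iff.mpr ?_)
    exact neg_nonpos.mpr (mul_pos hck (rpow_pos_of_pos (ha _) _)).le
  obtain ⟨L, hL⟩ : ∃ L, Tendsto a atTop (𝓝 L) :=
    ⟨_, (tendsto_add_atTop_iff_nat N).mp
      (tendsto_atTop_ciInf hanti ⟨0, by rintro _ ⟨k, rfl⟩; exact (ha _).le⟩)⟩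
  rcases (ge_of_tendsto' hL fun n => (ha n).le).eq_or_lt with rfl | hLpos
  · exact hL
  have hfix : L = exp (-(c₀ * L ^ γ)) * L := by
    refine tendsto_nhds_unique ((tendsto_add_atTop_iff_nat 1).mpr hL) ?_
    refine Tendsto.congr' (hrec.mono fun n hn => hn.symm) ?_
    exact ((hc.mul (hL.rpow_const (Or.inl hLpos.ne'))).neg.rexp).mul hL
  have hexp : exp (-(c₀ * L ^ γ)) < 1 :=
    exp_lt_one_iff.mpr (neg_neg_of_pos (mul_pos hc₀ (rpow_pos_of_pos hLpos _)))
  exact absurd hfix (mul_lt_of_lt_one_left hLpos hexp).ne'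

lemma tendsto_rpow_neg_succ_sub (ha : ∀ n, 0 < a n) (hγ : 0 < γ) (hc : Tendsto c atTop (𝓝 c₀))
    (hc₀ : 0 < c₀) (hrec : ∀ᶠ n in atTop, a (n + 1) = exp (-(c n * a n ^ γ)) * a n) :
    Tendsto (fun n => a (n + 1) ^ (-γ) - a n ^ (-γ)) atTop (𝓝 (γ * c₀)) := by
  set x := fun n => γ * c n * a n ^ γ with hx_def
  have hx : Tendsto x atTop (𝓝[≠] 0) := by
    refine tendsto_nhdsWithin_of_tendsto_nhds_of_eventually_within _ ?_ ?_
    · simpa [zero_rpow hγ.ne'] using (tendsto_const_nhds.mul hc).mul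
        ((tendsto_zero_of_eq_exp_neg_mul ha hc hc₀ hrec).rpow_const (Or.inr hγ.le))
    · filter_upwards [hc.eventually (lt_mem_nhds hc₀)] with n hn
      exact (mul_pos (mul_pos hγ hn) (rpow_pos_of_pos (ha n) _)).ne'
  have hlim := (tendsto_exp_sub_one_div.comp hx).mul (tendsto_const_nhds (x := γ) |>.mul hc)
  rw [one_mul] at hlim
  refine hlim.congr' ?_
  filter_upwards [hrec, hx eventually_mem_nhdsWithin] with n hn hxn
  have hcancel : a n ^ γ * a n ^ (-γ) = 1 := by
    rw [← rpow_add (ha n), add_neg_cancel, rpow_zero]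
  rw [Function.comp_apply, div_mul_eq_mul_div, div_eq_iff hxn, hn,
    mul_rpow (exp_pos _).le (ha n).le, ← exp_mul, show -(c n * a n ^ γ) * -γ = x n by ring]
  simp only [hx_def]
  linear_combination (-(exp (γ * c n * a n ^ γ) - 1) * γ * c n) * hcancel

theorem tendsto_mul_rpow_of_eq_exp_neg_mul (ha : ∀ n, 0 < a n) (hγ : 0 < γ)
    (hc : Tendsto c atTop (𝓝 c₀)) (hc₀ : 0 < c₀)
    (hrec : ∀ᶠ n in atTop, a (n + 1) = exp (-(c n * a n ^ γ)) * a n) :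
    Tendsto (fun n : ℕ => a n * (γ * c₀ * n) ^ (1 / γ)) atTop (𝓝 1) :=
  tendsto_mul_rpow_of_tendsto_rpow_neg_div ha hγ.ne' (mul_pos hγ hc₀)
    (tendsto_div_natCast_of_tendsto_sub (tendsto_rpow_neg_succ_sub ha hγ hc hc₀ hrec))

end ExpRecursion

theorem stmt3 (a : ℕ → ℝ) (ha : ∀ n, 0 < a n) (γ A : ℝ) (hγ : 0 < γ) (hA : 0 < A)
    (n₀ : ℕ) (δ : ℕ → ℝ) (hδ : Filter.Tendsto δ Filter.atTop (nhds 0))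
    (hrec : ∀ n ≥ n₀, a (n + 1) = Real.exp (-((1 + δ n) * A * a n ^ γ)) * a n) :
    Filter.Tendsto (fun n : ℕ => a n * (γ * A * n) ^ (1 / γ)) Filter.atTop (nhds 1) :=
  tendsto_mul_rpow_of_eq_exp_neg_mul ha hγ (by simpa using (hδ.const_add 1).mul_const A) hA
    (eventually_atTop.mpr ⟨n₀, hrec⟩)
end

section
/- For all nonnegative integers a, b and positive integer m, define Δ_m(a,b) = (a+b)·min(a+b,m) − a·min(a,m) − b·min(b,m). Then Δ_m(a,b) ≤ 2·min(a,m)·min(b,m). -/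
theorem stmt4 (a b m : ℕ) (hm : 0 < m) :
    (((a + b) * min (a + b) m : ℕ) : ℤ) - ((a * min a m : ℕ) : ℤ) - ((b * min b m : ℕ) : ℤ)
      ≤ 2 * ((min a m : ℕ) : ℤ) * ((min b m : ℕ) : ℤ) := by
  rcases le_total (a + b) m with h | h
  · rw [min_eq_left h, min_eq_left (le_trans (Nat.le_add_right a b) h),
      min_eq_left (le_trans (Nat.le_add_left b a) h)]
    push_cast
    nlinarith
  · rw [min_eq_right h]
    rcases le_total a m with ha | ha <;> rcases le_total b m with hb | hb
    · rw [min_eq_left ha, min_eq_left hb]; push_cast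
      have : (m : ℤ) ≤ a + b := by exact_mod_cast h
      nlinarith
    · rw [min_eq_left ha, min_eq_right hb]; push_cast; nlinarith
    · rw [min_eq_right ha, min_eq_left hb]; push_cast; nlinarith
    · rw [min_eq_right ha, min_eq_right hb]; push_cast; nlinarith
end

section
/- A subset A of ℓ^p (1 ≤ p < ∞) consisting of weakly decreasing nonnegative sequences is precompact (totally bounded) in ℓ^p if and only if A is bounded in the ℓ^p norm and for every ε > 0 there exists δ > 0 such that sup_{x ∈ A} ∑_{i : x_i ≤ δ} x_i^p ≤ ε. -/
/-!
For `p < ∞`, a bounded set in `ℓ^p` is totally bounded exactly when its tails outside finite sets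
of coordinates are uniformly small: a finite `ε`-net controls the tails of the whole set, and
conversely the truncations to finitely many coordinates range over a compact set.

For nonnegative decreasing sequences, `(n + 1) xₙ ^ p ≤ ‖x‖ ^ p`, so a norm bound `C` forces every
coordinate past `N > (C / δ) ^ p` to be at most `δ`; the tail past `N` is then dominated by the
mass of the coordinates below `δ`. Conversely, the mass below `δ` is at most `|s| δ ^ p` plus the
tail outside any finite set `s`.
-/

open scoped ENNReal

open Filter Metric

namespace lp

variable {ι : Type*} {E : ι → Type*} [∀ i, NormedAddCommGroup (E i)] {p : ℝ≥0∞} [DecidableEq ι]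

theorem sub_sum_single_apply (x : lp E p) (s : Finset ι) (j : ι) :
    (x - ∑ i ∈ s, lp.single p i (x i)) j = if j ∈ s then 0 else x j := by
  simp only [coeFn_sub, coeFn_sum, lp.coeFn_single, Pi.sub_apply, Finset.sum_apply,
    Finset.sum_pi_single]
  split_ifs <;> simp

theorem sub_sum_single_sub (x y : lp E p) (s : Finset ι) :
    (x - y) - ∑ i ∈ s, lp.single p i ((x - y) i) =
      (x - ∑ i ∈ s, lp.single p i (x i)) - (y - ∑ i ∈ s, lp.single p i (y i)) := by
  simp only [coeFn_sub, Pi.sub_apply, lp.single_sub, Finset.sum_sub_distrib]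
  abel

variable [Fact (1 ≤ p)]

theorem norm_sub_sum_single_le (hp : 0 < p.toReal) (x : lp E p) (s : Finset ι) :
    ‖x - ∑ i ∈ s, lp.single p i (x i)‖ ≤ ‖x‖ := by
  rw [← Real.rpow_le_rpow_iff (norm_nonneg _) (norm_nonneg _) hp, lp.norm_compl_sum_single hp]
  exact sub_le_self _ (Finset.sum_nonneg fun i _ => by positivity)

def HasUniformlySmallTails (A : Set (lp E p)) : Prop :=
  ∀ ε > 0, ∃ s : Finset ι, ∀ x ∈ A, ‖x - ∑ i ∈ s, lp.single p i (x i)‖ ≤ ε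

theorem _root_.TotallyBounded.hasUniformlySmallTails (hp : p ≠ ∞) {A : Set (lp E p)}
    (hA : TotallyBounded A) : HasUniformlySmallTails A := by
  have hr : 0 < p.toReal := ENNReal.toReal_pos (zero_lt_one.trans_le Fact.out).ne' hp
  intro ε hε
  obtain ⟨t, ht, hAt⟩ := totallyBounded_iff.mp hA (ε / 2) (half_pos hε)
  have hnet : ∀ᶠ s in atTop, ∀ y ∈ t, ‖y - ∑ i ∈ s, lp.single p i (y i)‖ < ε / 2 :=
    (eventually_all_finite ht).2 fun y _ =>
      (lp.hasSum_single hp y).eventually (ball_mem_nhds y (half_pos hε)) |>.mono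
        fun s hs => by rwa [dist_comm, dist_eq_norm] at hs
  obtain ⟨s, hs⟩ := hnet.exists
  refine ⟨s, fun x hx => ?_⟩
  obtain ⟨y, hyt, hxy⟩ := Set.mem_iUnion₂.mp (hAt hx)
  rw [mem_ball_iff_norm] at hxy
  calc ‖x - ∑ i ∈ s, lp.single p i (x i)‖
      = ‖((x - y) - ∑ i ∈ s, lp.single p i ((x - y) i)) +
          (y - ∑ i ∈ s, lp.single p i (y i))‖ := by rw [sub_sum_single_sub, sub_add_cancel]
    _ ≤ ‖x - y‖ + ε / 2 := norm_add_le_of_le (norm_sub_sum_single_le hr _ s) (hs y hyt).le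
    _ ≤ ε := by linarith

theorem totallyBounded_image_sum_single [∀ i, ProperSpace (E i)] {A : Set (lp E p)}
    (hA : Bornology.IsBounded A) (s : Finset ι) :
    TotallyBounded ((fun x : lp E p => ∑ i ∈ s, lp.single p i (x i)) '' A) := by
  obtain ⟨C, hC⟩ := isBounded_iff_forall_norm_le.mp hA
  let Φ : (∀ i : s, E i) → lp E p := fun v => ∑ i : s, lp.single p i (v i)
  have hΦ : Continuous Φ := continuous_finsetSum _ fun i _ =>
    (isometry_single (i : ι)).continuous.comp (continuous_apply i)
  refine ((isCompact_closedBall (0 : ∀ i : s, E i) C).image hΦ).totallyBounded.subset ?_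
  rintro _ ⟨x, hx, rfl⟩
  refine ⟨fun i => x i, ?_, Finset.sum_coe_sort s fun i => lp.single p i (x i)⟩
  rw [mem_closedBall_zero_iff, pi_norm_le_iff_of_nonneg ((norm_nonneg x).trans (hC x hx))]
  exact fun i => (lp.norm_apply_le_norm (zero_lt_one.trans_le Fact.out).ne' x i).trans (hC x hx)

theorem totallyBounded_of_hasUniformlySmallTails [∀ i, ProperSpace (E i)] {A : Set (lp E p)}
    (hA : Bornology.IsBounded A) (htail : HasUniformlySmallTails A) : TotallyBounded A := by
  refine totallyBounded_iff.mpr fun ε hε => ?_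
  obtain ⟨s, hs⟩ := htail (ε / 2) (half_pos hε)
  obtain ⟨t, ht, hcover⟩ :=
    totallyBounded_iff.mp (totallyBounded_image_sum_single hA s) (ε / 2) (half_pos hε)
  refine ⟨t, ht, fun x hx => ?_⟩
  obtain ⟨y, hyt, hy⟩ := Set.mem_iUnion₂.mp (hcover ⟨x, hx, rfl⟩)
  refine Set.mem_iUnion₂.mpr ⟨y, hyt, ?_⟩
  rw [mem_ball] at hy ⊢
  calc dist x y
      ≤ dist x (∑ i ∈ s, lp.single p i (x i)) + dist (∑ i ∈ s, lp.single p i (x i)) y :=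
        dist_triangle _ _ _
    _ < ε / 2 + ε / 2 := add_lt_add_of_le_of_lt (by rw [dist_eq_norm]; exact hs x hx) hy
    _ = ε := add_halves ε

theorem totallyBounded_iff_isBounded_and_hasUniformlySmallTails [∀ i, ProperSpace (E i)]
    (hp : p ≠ ∞) {A : Set (lp E p)} :
    TotallyBounded A ↔ Bornology.IsBounded A ∧ HasUniformlySmallTails A :=
  ⟨fun hA => ⟨hA.isBounded, hA.hasUniformlySmallTails hp⟩,
    fun h => totallyBounded_of_hasUniformlySmallTails h.1 h.2⟩

end lp

section MassBelow

variable {ι : Type*} [DecidableEq ι] {p : ℝ≥0∞}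

noncomputable def massBelow (r δ : ℝ) (x : ι → ℝ) : ℝ :=
  ∑' i, if x i ≤ δ then x i ^ r else 0

theorem massBelow_le_card_mul_add (hp : 0 < p.toReal) {x : lp (fun _ : ι => ℝ) p}
    (hx : ∀ i, 0 ≤ x i) {δ : ℝ} (hδ : 0 ≤ δ) (s : Finset ι) :
    massBelow p.toReal δ x ≤
      s.card * δ ^ p.toReal + ‖x - ∑ i ∈ s, lp.single p i (x i)‖ ^ p.toReal := by
  have hterm : ∀ j, (if x j ≤ δ then x j ^ p.toReal else 0) ≤
      (if j ∈ s then δ ^ p.toReal else 0) +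
        ‖(x - ∑ i ∈ s, lp.single p i (x i)) j‖ ^ p.toReal := by
    intro j
    rw [lp.sub_sum_single_apply]
    by_cases hj : j ∈ s
    · simp only [if_pos hj, norm_zero, Real.zero_rpow hp.ne', add_zero]
      split_ifs with hxj
      exacts [Real.rpow_le_rpow (hx j) hxj hp.le, by positivity]
    · simp only [if_neg hj, zero_add, Real.norm_of_nonneg (hx j)]
      split_ifs
      exacts [le_rfl, Real.rpow_nonneg (hx j) _]
  refine Real.tsum_le_of_sum_le
    (fun j => by split_ifs; exacts [Real.rpow_nonneg (hx j) _, le_rfl]) fun u => ?_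
  calc ∑ j ∈ u, (if x j ≤ δ then x j ^ p.toReal else 0)
      ≤ ∑ j ∈ u, ((if j ∈ s then δ ^ p.toReal else 0) +
          ‖(x - ∑ i ∈ s, lp.single p i (x i)) j‖ ^ p.toReal) :=
        Finset.sum_le_sum fun j _ => hterm j
    _ = ∑ j ∈ u ∩ s, δ ^ p.toReal +
          ∑ j ∈ u, ‖(x - ∑ i ∈ s, lp.single p i (x i)) j‖ ^ p.toReal := by
        rw [Finset.sum_add_distrib, Finset.sum_ite_mem]
    _ ≤ s.card * δ ^ p.toReal + ‖x - ∑ i ∈ s, lp.single p i (x i)‖ ^ p.toReal := by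
        gcongr
        · rw [Finset.sum_const, nsmul_eq_mul]
          gcongr
          exact Finset.inter_subset_right
        · exact lp.sum_rpow_le_norm_rpow hp _ u

theorem norm_sub_sum_single_rpow_le_massBelow (hp : 0 < p.toReal) {x : lp (fun _ : ι => ℝ) p}
    (hx : ∀ i, 0 ≤ x i) {δ : ℝ} {s : Finset ι} (hs : ∀ i ∉ s, x i ≤ δ) :
    ‖x - ∑ i ∈ s, lp.single p i (x i)‖ ^ p.toReal ≤ massBelow p.toReal δ x := by
  have hle : ∀ j, (if x j ≤ δ then x j ^ p.toReal else 0) ≤ ‖x j‖ ^ p.toReal := fun j => by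
    split_ifs
    · rw [Real.norm_of_nonneg (hx j)]
    · positivity
  rw [lp.norm_rpow_eq_tsum hp]
  refine Summable.tsum_le_tsum (fun j => ?_) ((lp.memℓp _).summable hp)
    (((lp.memℓp x).summable hp).of_nonneg_of_le
      (fun j => by split_ifs; exacts [Real.rpow_nonneg (hx j) _, le_rfl]) hle)
  rw [lp.sub_sum_single_apply]
  by_cases hj : j ∈ s
  · simp only [if_pos hj, norm_zero, Real.zero_rpow hp.ne']
    split_ifs
    exacts [Real.rpow_nonneg (hx j) _, le_rfl]
  · simp only [if_neg hj, if_pos (hs j hj), Real.norm_of_nonneg (hx j), le_refl]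

end MassBelow

theorem apply_le_of_antitone_of_norm_rpow_lt {p : ℝ≥0∞} (hp : 0 < p.toReal)
    {x : lp (fun _ : ℕ => ℝ) p} (hx : Antitone (x : ℕ → ℝ)) {δ : ℝ} (hδ : 0 ≤ δ) {n : ℕ}
    (hn : ‖x‖ ^ p.toReal < (n + 1) * δ ^ p.toReal) : x n ≤ δ := by
  by_contra! hlt
  refine hn.not_ge ?_
  calc ((n : ℝ) + 1) * δ ^ p.toReal = ∑ _j ∈ Finset.range (n + 1), δ ^ p.toReal := by
        rw [Finset.sum_const, Finset.card_range, nsmul_eq_mul]; push_cast; ring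
    _ ≤ ∑ j ∈ Finset.range (n + 1), ‖x j‖ ^ p.toReal := by
        refine Finset.sum_le_sum fun j hj => ?_
        have : δ ≤ x j := hlt.le.trans (hx (Finset.mem_range_succ_iff.mp hj))
        exact Real.rpow_le_rpow hδ (this.trans (Real.le_norm_self _)) hp.le
    _ ≤ ‖x‖ ^ p.toReal := lp.sum_rpow_le_norm_rpow hp x _

theorem exists_pos_mul_rpow_le {c r ε : ℝ} (hc : 0 ≤ c) (hr : 0 < r) (hε : 0 < ε) :
    ∃ δ > 0, c * δ ^ r ≤ ε := by
  refine ⟨(ε / (c + 1)) ^ r⁻¹, by positivity, ?_⟩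
  rw [Real.rpow_inv_rpow (by positivity) hr.ne']
  calc c * (ε / (c + 1)) ≤ (c + 1) * (ε / (c + 1)) := by gcongr; linarith
    _ = ε := mul_div_cancel₀ _ (by positivity)

theorem stmt15 (p : ℝ≥0∞) [hp : Fact (1 ≤ p)] (hp' : p ≠ ∞)
    (A : Set (lp (fun _ : ℕ => ℝ) p))
    (hmono : ∀ x ∈ A, Antitone (fun i : ℕ => (x : ∀ _ : ℕ, ℝ) i))
    (hpos : ∀ x ∈ A, ∀ i : ℕ, 0 ≤ (x : ∀ _ : ℕ, ℝ) i) :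
    TotallyBounded A ↔
      ((∃ C : ℝ, ∀ x ∈ A, ‖x‖ ≤ C) ∧
        ∀ ε > (0 : ℝ), ∃ δ > (0 : ℝ), ∀ x ∈ A,
          (∑' i : ℕ, if (x : ∀ _ : ℕ, ℝ) i ≤ δ
            then ((x : ∀ _ : ℕ, ℝ) i) ^ p.toReal else 0) ≤ ε) := by
  have hr : 0 < p.toReal := ENNReal.toReal_pos (zero_lt_one.trans_le hp.out).ne' hp'
  rw [lp.totallyBounded_iff_isBounded_and_hasUniformlySmallTails hp',
    isBounded_iff_forall_norm_le]
  refine and_congr_right fun ⟨C, hC⟩ => ⟨fun htail ε hε => ?_, fun hmass ε hε => ?_⟩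
  · obtain ⟨s, hs⟩ := htail ((ε / 2) ^ p.toReal⁻¹) (by positivity)
    obtain ⟨δ, hδ, hδs⟩ := exists_pos_mul_rpow_le (Nat.cast_nonneg s.card) hr (half_pos hε)
    refine ⟨δ, hδ, fun x hx => (massBelow_le_card_mul_add hr (hpos x hx) hδ.le s).trans ?_⟩
    have htail_x :=
      (Real.le_rpow_inv_iff_of_pos (norm_nonneg _) (half_pos hε).le hr).mp (hs x hx)
    linarith
  · obtain ⟨δ, hδ, hδA⟩ := hmass (ε ^ p.toReal) (by positivity)
    obtain ⟨N, hN⟩ := exists_nat_gt (C ^ p.toReal / δ ^ p.toReal)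
    refine ⟨Finset.range N, fun x hx => ?_⟩
    have hsmall : ∀ n ∉ Finset.range N, x n ≤ δ := fun n hn =>
      apply_le_of_antitone_of_norm_rpow_lt hr (hmono x hx) hδ.le <| calc
        ‖x‖ ^ p.toReal ≤ C ^ p.toReal := Real.rpow_le_rpow (norm_nonneg x) (hC x hx) hr.le
        _ < N * δ ^ p.toReal := (div_lt_iff₀ (by positivity)).mp hN
        _ ≤ (n + 1) * δ ^ p.toReal := by
          gcongr
          exact_mod_cast (not_lt.mp (Finset.mem_range.not.mp hn)).trans n.le_succ
    rw [← Real.rpow_le_rpow_iff (norm_nonneg _) hε.le hr]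
    exact (norm_sub_sum_single_rpow_le_massBelow hr (hpos x hx) hsmall).trans (hδA x hx)
end
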